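/- arXiv:2002.03277 — 4 statements merged into one kernel-verified Lean document; each statement's English description precedes it below -/
import Mathlib

section
/- Given a family of sequential tests (T(α), δ(α)) parameterized by α ∈ (0,1] such that T(α) is nonincreasing in α and δ(α) is nondecreasing in α (pointwise almost surely), and such that P_{H_0}(δ(α) = 1) ≤ α for all α, the process p_n := inf{α : T(α) ≤ n, δ(α) = 1} (with inf ∅ = 1) satisfies: for every stopping time T and every s ∈ [0,1], P_{H_0}(p_T ≤ s) ≤ s. -/
open MeasureTheory

/-- From a family of sequential tests `(T α, δ α)` with type I error control and the
monotonicity properties in `α`, the derived process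
`p n = inf {α : T α ≤ n ∧ δ α = 1}` (with `inf ∅ = 1`) is an always valid p-value
process: `P(p_τ ≤ s) ≤ s` for every (possibly infinite) stopping time `τ` and every
`s ∈ [0,1]`, where `p_∞ := inf_n p_n`. -/
theorem always_valid_p_value_from_sequential_tests
    {Ω : Type*} {m : MeasurableSpace Ω} {P : Measure Ω} [IsProbabilityMeasure P]
    (ℱ : Filtration ℕ m)
    (T : ℝ → Ω → ℕ∞) (δ : ℝ → Ω → Bool)
    (hTst : ∀ α ∈ Set.Ioc (0 : ℝ) 1, ∀ n : ℕ, MeasurableSet[ℱ n] {ω | T α ω ≤ (n : ℕ∞)})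
    (hδmeas : ∀ α ∈ Set.Ioc (0 : ℝ) 1, Measurable (δ α))
    (htypeI : ∀ α ∈ Set.Ioc (0 : ℝ) 1, P {ω | δ α ω = true} ≤ ENNReal.ofReal α)
    (hTmono : ∀ α α', α ∈ Set.Ioc (0 : ℝ) 1 → α' ∈ Set.Ioc (0 : ℝ) 1 → α ≤ α' →
      ∀ ω, T α' ω ≤ T α ω)
    (hδmono : ∀ α α', α ∈ Set.Ioc (0 : ℝ) 1 → α' ∈ Set.Ioc (0 : ℝ) 1 → α ≤ α' →
      ∀ ω, δ α ω = true → δ α' ω = true)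
    -- the always-valid p-value process derived from the family of tests
    (p : ℕ → Ω → ℝ)
    (hp : ∀ n ω, p n ω =
      sInf ({α : ℝ | α ∈ Set.Ioc (0 : ℝ) 1 ∧ T α ω ≤ (n : ℕ∞) ∧ δ α ω = true} ∪ {1})) :
    ∀ τ : Ω → ℕ∞, (∀ n : ℕ, MeasurableSet[ℱ n] {ω | τ ω ≤ (n : ℕ∞)}) →
      ∀ s ∈ Set.Icc (0 : ℝ) 1,
        P {ω | (if h : τ ω = ⊤ then ⨅ n, p n ω else p (τ ω).toNat ω) ≤ s} ≤
          ENNReal.ofReal s := by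
  intro τ hτ s hs
  set A := {ω | (if h : τ ω = ⊤ then ⨅ n, p n ω else p (τ ω).toNat ω) ≤ s} with hA
  have key : ∀ α, s < α → α ≤ 1 → A ⊆ {ω | δ α ω = true} := by
    intro α hsα hα1 ω hω
    have hα : α ∈ Set.Ioc (0:ℝ) 1 := ⟨lt_of_le_of_lt hs.1 hsα, hα1⟩
    have hlt : ∀ n : ℕ, p n ω < α → δ α ω = true := by
      intro n hn
      rw [hp] at hn
      have hne : ({α' : ℝ | α' ∈ Set.Ioc (0:ℝ) 1 ∧ T α' ω ≤ (n:ℕ∞) ∧ δ α' ω = true}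
          ∪ {1}).Nonempty := ⟨1, Or.inr rfl⟩
      obtain ⟨x, hx, hxlt⟩ := exists_lt_of_csInf_lt hne hn
      rcases hx with ⟨hx1, _, hx3⟩ | hx1
      · exact hδmono x α hx1 hα hxlt.le ω hx3
      · exact absurd (hx1 ▸ hxlt) (not_lt.mpr hα1)
    simp only [hA, Set.mem_setOf_eq] at hω
    by_cases h : τ ω = ⊤
    · rw [dif_pos h] at hω
      obtain ⟨n, hn⟩ := exists_lt_of_ciInf_lt (lt_of_le_of_lt hω hsα)
      exact hlt n hn
    · rw [dif_neg h] at hω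
      exact hlt _ (lt_of_le_of_lt hω hsα)
  have hP : ∀ α, s < α → α ≤ 1 → P A ≤ ENNReal.ofReal α := fun α h1 h2 =>
    le_trans (measure_mono (key α h1 h2)) (htypeI α ⟨lt_of_le_of_lt hs.1 h1, h2⟩)
  rcases eq_or_lt_of_le hs.2 with heq | hslt
  · calc P A ≤ 1 := prob_le_one
      _ = ENNReal.ofReal s := by rw [heq]; simp
  · refine ENNReal.le_of_forall_pos_le_add fun ε hε _ => ?_
    have hεpos : (0:ℝ) < (ε:ℝ) := by exact_mod_cast hε
    have hsα : s < min 1 (s + ε) := lt_min hslt (lt_add_of_pos_right s hεpos)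
    calc P A ≤ ENNReal.ofReal (min 1 (s + ε)) := hP _ hsα (min_le_left _ _)
      _ ≤ ENNReal.ofReal (s + ε) := ENNReal.ofReal_le_ofReal (min_le_right _ _)
      _ = ENNReal.ofReal s + ENNReal.ofReal ε := ENNReal.ofReal_add hs.1 ε.coe_nonneg
      _ = ENNReal.ofReal s + ε := by rw [ENNReal.ofReal_coe_nnreal]
end

section
/- Let Z_1, Z_2, ... be i.i.d. standard normal and let p_n be the naive fixed-horizon p-value p_n = 2(1 − Φ(|S_n|/√n)) where S_n = Z_1 + ... + Z_n. Then for every α ∈ (0,1), the stopping rule 'reject at the first n with p_n ≤ α' rejects with probability 1; i.e., P(∃ n : p_n ≤ α) = 1. -/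
/-!
Split the observations into the dyadic blocks `[2^k, 2^(k+1))`. The block sums are independent
and `N(0, 2^k)`, so the events `{block sum ≥ 2c·√(2^(k+1))}` are independent with the same
positive probability, and by the second Borel–Cantelli lemma infinitely many of them occur.
Since the block sum is `S (2^(k+1)) - S (2^k)`, on each such event one of the two partial sums
satisfies `|S n| ≥ c √n`; choosing `c` with `Φ c > 1 - α/2` makes `p n ≤ α` there.
-/

open MeasureTheory ProbabilityTheory Real Set Filter
open scoped NNReal ENNReal

namespace ProbabilityTheory

lemma iIndepSet_of_measurableSet_iSup_Ico {Ω : Type*} {mΩ : MeasurableSpace Ω} {μ : Measure Ω}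
    {m : ℕ → MeasurableSpace Ω} (h_le : ∀ i, m i ≤ mΩ) (h_indep : iIndep m μ)
    {N : ℕ → ℕ} (hN : Monotone N) {A : ℕ → Set Ω}
    (hA : ∀ k, MeasurableSet[⨆ i ∈ Ico (N k) (N (k + 1)), m i] (A k)) :
    iIndepSet A μ := by
  classical
  have := h_indep.isProbabilityMeasure
  have hA_meas k : MeasurableSet (A k) := iSup₂_le (fun i _ ↦ h_le i) _ (hA k)
  rw [iIndepSet_iff_meas_biInter hA_meas]
  intro s
  induction s using Finset.induction_on_max with
  | empty => simp
  | insert K s hlt ih =>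
    have hK : K ∉ s := fun hK ↦ (hlt K hK).false
    have h_past : MeasurableSet[⨆ i ∈ Iio (N K), m i] (⋂ k ∈ s, A k) := by
      refine Finset.measurableSet_biInter s fun k hk ↦ ?_
      have hle : (⨆ i ∈ Ico (N k) (N (k + 1)), m i) ≤ ⨆ i ∈ Iio (N K), m i :=
        biSup_mono fun i hi ↦ hi.2.trans_le (hN (hlt k hk))
      exact hle _ (hA k)
    have h_disj : Disjoint (Ico (N K) (N (K + 1))) (Iio (N K)) :=
      Set.disjoint_left.2 fun i hi hi' ↦ (not_lt.2 hi.1) hi'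
    rw [Finset.set_biInter_insert, Finset.prod_insert hK, ← ih]
    exact (Indep_iff _ _ _).1 (indep_iSup_of_disjoint h_le h_indep h_disj) _ _ (hA K) h_past

lemma measurable_sum_iSup_comap {ι Ω : Type*} {X : ι → Ω → ℝ} {s : Finset ι} {S : Set ι}
    (hs : ∀ i ∈ s, i ∈ S) :
    Measurable[⨆ i ∈ S, MeasurableSpace.comap (X i) inferInstance] fun ω ↦ ∑ i ∈ s, X i ω :=
  Finset.measurable_sum s fun i hi ↦ (comap_measurable (X i)).mono
    (le_iSup₂ (f := fun i (_ : i ∈ S) ↦ MeasurableSpace.comap (X i) inferInstance) i (hs i hi))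
    le_rfl

lemma map_sum_eq_gaussianReal {ι Ω : Type*} {mΩ : MeasurableSpace Ω} {P : Measure Ω}
    {X : ι → Ω → ℝ} (hX : ∀ i, Measurable (X i)) (h_indep : iIndepFun X P)
    {μ : ι → ℝ} {v : ι → ℝ≥0} (hlaw : ∀ i, P.map (X i) = gaussianReal (μ i) (v i))
    (s : Finset ι) :
    P.map (∑ i ∈ s, X i) = gaussianReal (∑ i ∈ s, μ i) (∑ i ∈ s, v i) := by
  have := h_indep.isProbabilityMeasure
  induction s using Finset.cons_induction with
  | empty => simp [gaussianReal_zero_var, Pi.zero_def, Measure.map_const]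
  | cons a s ha ih =>
    rw [Finset.sum_cons, Finset.sum_cons, Finset.sum_cons]
    exact gaussianReal_add_gaussianReal_of_indepFun
      (h_indep.indepFun_finsetSum_of_notMem hX ha).symm (hlaw a) ih

lemma gaussianReal_Ici_mul_sqrt {v : ℝ≥0} (hv : v ≠ 0) (l : ℝ) :
    gaussianReal 0 v (Ici (l * √v)) = gaussianReal 0 1 (Ici l) := by
  have hsqrt : 0 < √(v : ℝ) := sqrt_pos.2 (NNReal.coe_pos.2 (pos_iff_ne_zero.2 hv))
  have hmap : (gaussianReal 0 1).map (√(v : ℝ) * ·) = gaussianReal 0 v := by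
    rw [gaussianReal_map_const_mul]
    congr 1
    · simp
    · ext; simp
  rw [← hmap, Measure.map_apply (measurable_const_mul _) measurableSet_Ici]
  congr 1
  ext x
  simp [mul_comm l, mul_le_mul_iff_right₀ hsqrt]

lemma gaussianReal_Ici_ne_zero (μ : ℝ) {v : ℝ≥0} (hv : v ≠ 0) (x : ℝ) :
    gaussianReal μ v (Ici x) ≠ 0 := fun h ↦ by
  simpa using gaussianReal_absolutelyContinuous' μ hv h

lemma measure_mul_sqrt_card_le_sum {ι Ω : Type*} {mΩ : MeasurableSpace Ω} {P : Measure Ω}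
    {X : ι → Ω → ℝ} (hX : ∀ i, Measurable (X i)) (h_indep : iIndepFun X P)
    (hlaw : ∀ i, P.map (X i) = gaussianReal 0 1) {s : Finset ι} (hs : s.Nonempty) (l : ℝ) :
    P {ω | l * √(s.card : ℝ) ≤ ∑ i ∈ s, X i ω} = gaussianReal 0 1 (Ici l) := by
  have hmap : P.map (∑ i ∈ s, X i) = gaussianReal 0 s.card := by
    simpa using map_sum_eq_gaussianReal hX h_indep hlaw s
  have hpre : {ω | l * √(s.card : ℝ) ≤ ∑ i ∈ s, X i ω}
      = (∑ i ∈ s, X i) ⁻¹' Ici (l * √((s.card : ℝ≥0) : ℝ)) := by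
    ext; simp [Finset.sum_apply]
  have hsum_meas : Measurable (∑ i ∈ s, X i) := by fun_prop
  rw [hpre, ← Measure.map_apply hsum_meas measurableSet_Ici, hmap,
    gaussianReal_Ici_mul_sqrt (by simpa using hs.ne_empty)]

section DyadicBlocks

variable {Ω : Type*} {mΩ : MeasurableSpace Ω} {P : Measure Ω} {Z : ℕ → Ω → ℝ}

lemma iIndepSet_le_sum_Ico_two_pow (hZ : ∀ i, Measurable (Z i)) (h_indep : iIndepFun Z P)
    (t : ℕ → ℝ) :
    iIndepSet (fun k ↦ {ω | t k ≤ ∑ i ∈ Finset.Ico (2 ^ k) (2 ^ (k + 1)), Z i ω}) P :=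
  iIndepSet_of_measurableSet_iSup_Ico (fun i ↦ (hZ i).comap_le) h_indep.iIndep
    (N := (2 ^ ·)) (fun _ _ h ↦ Nat.pow_le_pow_right two_pos h) fun _ ↦
      measurableSet_le measurable_const (measurable_sum_iSup_comap fun _ hi ↦ by simpa using hi)

variable (hZ : ∀ i, Measurable (Z i)) (h_indep : iIndepFun Z P)
  (hlaw : ∀ i, P.map (Z i) = gaussianReal 0 1)
include hZ h_indep hlaw

lemma measure_mul_sqrt_two_pow_le_sum_Ico (l : ℝ) (k : ℕ) :
    P {ω | l * √(2 ^ k : ℝ) ≤ ∑ i ∈ Finset.Ico (2 ^ k) (2 ^ (k + 1)), Z i ω}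
      = gaussianReal 0 1 (Ici l) := by
  have hcard : (Finset.Ico (2 ^ k) (2 ^ (k + 1))).card = 2 ^ k := by
    rw [Nat.card_Ico, pow_succ]
    omega
  have h := measure_mul_sqrt_card_le_sum hZ h_indep hlaw
    (Finset.nonempty_Ico.2 (Nat.pow_lt_pow_right one_lt_two k.lt_succ_self)) l
  rwa [hcard, Nat.cast_pow, Nat.cast_ofNat] at h

lemma measure_limsup_mul_sqrt_two_pow_le_sum_Ico (l : ℝ) :
    P (limsup (fun k ↦ {ω | l * √(2 ^ k : ℝ) ≤ ∑ i ∈ Finset.Ico (2 ^ k) (2 ^ (k + 1)), Z i ω})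
      atTop) = 1 :=
  measure_limsup_eq_one
    (fun _ ↦ measurableSet_le measurable_const (Finset.measurable_sum _ fun i _ ↦ hZ i))
    (iIndepSet_le_sum_Ico_two_pow hZ h_indep _)
    (by simp [measure_mul_sqrt_two_pow_le_sum_Ico hZ h_indep hlaw,
      ENNReal.tsum_const_eq_top_of_ne_zero (gaussianReal_Ici_ne_zero _ one_ne_zero _)])

end DyadicBlocks

end ProbabilityTheory

lemma le_abs_or_le_abs_of_two_mul_le_sub {x y r : ℝ} (h : 2 * r ≤ y - x) : r ≤ |x| ∨ r ≤ |y| := by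
  by_contra! h'
  linarith [neg_abs_le x, le_abs_self y]

lemma exists_le_abs_div_sqrt_of_two_mul_le_sub {s : ℕ → ℝ} {c : ℝ} (hc : 0 ≤ c) {n m : ℕ}
    (hn : 0 < n) (hnm : n ≤ m) (h : 2 * (c * √m) ≤ s m - s n) :
    ∃ j, 0 < j ∧ c ≤ |s j| / √j := by
  rcases le_abs_or_le_abs_of_two_mul_le_sub h with h | h
  · refine ⟨n, hn, (le_div_iff₀ (sqrt_pos.2 (by exact_mod_cast hn))).2 ?_⟩
    calc c * √n ≤ c * √m := by gcongr
      _ ≤ |s n| := h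
  · exact ⟨m, hn.trans_le hnm, (le_div_iff₀ (sqrt_pos.2 (by exact_mod_cast hn.trans_le hnm))).2 h⟩

/-- Continuously monitoring the naive fixed-horizon p-value
`p n = 2 (1 - Φ(|S n|/√n))` of i.i.d. standard normal observations and stopping the
first time it drops below `α` rejects with probability 1, for every `α ∈ (0,1)`. -/
theorem naive_peeking_has_type_I_error_one
    {Ω : Type*} {m : MeasurableSpace Ω} {P : Measure Ω} [IsProbabilityMeasure P]
    (Z : ℕ → Ω → ℝ) (hZmeas : ∀ i, Measurable (Z i))
    (hiid : iIndepFun Z P)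
    (hlaw : ∀ i, P.map (Z i) = gaussianReal 0 1)
    (Φ : ℝ → ℝ) (hΦ : ∀ x, Φ x = ((gaussianReal 0 1) (Set.Iic x)).toReal)
    (S : ℕ → Ω → ℝ) (hS : ∀ n ω, S n ω = ∑ i ∈ Finset.range n, Z i ω)
    (p : ℕ → Ω → ℝ)
    (hp : ∀ n ω, p n ω = 2 * (1 - Φ (|S n ω| / Real.sqrt n)))
    {α : ℝ} (hα : α ∈ Set.Ioo (0 : ℝ) 1) :
    P {ω | ∃ n : ℕ, 1 ≤ n ∧ p n ω ≤ α} = 1 := by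
  have hΦ_cdf : Φ = cdf (gaussianReal 0 1) :=
    funext fun x ↦ by rw [hΦ, cdf_eq_real, measureReal_def]
  obtain ⟨c, hc, hc0⟩ : ∃ c, 1 - α / 2 < Φ c ∧ 0 ≤ c := by
    rw [hΦ_cdf]
    exact (((tendsto_cdf_atTop _).eventually (eventually_gt_nhds (by linarith [hα.1]))).and
      (eventually_ge_atTop 0)).exists
  refine le_antisymm prob_le_one ?_
  rw [← measure_limsup_mul_sqrt_two_pow_le_sum_Ico hZmeas hiid hlaw (2 * √2 * c)]
  refine measure_mono (limsup_le_iSup.trans (iUnion_subset fun k ω hω ↦ ?_))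
  have hk : 2 ^ k ≤ 2 ^ (k + 1) := Nat.pow_le_pow_right two_pos k.le_succ
  have h_incr : 2 * (c * √((2 ^ (k + 1) : ℕ) : ℝ)) ≤ S (2 ^ (k + 1)) ω - S (2 ^ k) ω := by
    rw [hS, hS, ← Finset.sum_Ico_eq_sub _ hk]
    convert (mem_ofPred_eq ▸ hω) using 1
    push_cast
    rw [pow_succ, sqrt_mul (by positivity)]
    ring
  obtain ⟨n, hn, hcn⟩ :=
    exists_le_abs_div_sqrt_of_two_mul_le_sub (s := (S · ω)) hc0 (Nat.two_pow_pos k) hk h_incr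
  exact ⟨n, hn, by rw [hp]; linarith [hΦ_cdf ▸ monotone_cdf (gaussianReal 0 1) hcn]⟩
end

section
/- The Benjamini–Yekutieli procedure, which sorts p-values p^{(1)} ≤ ... ≤ p^{(m)} and rejects hypotheses (1),...,(j) for the maximal j with p^{(j)} ≤ αj/(m·H_m) where H_m = Σ_{r=1}^m 1/r, controls the false discovery rate at level α under arbitrary dependence among the p-values: E[V/max(R,1)] ≤ α, where V is the number of falsely rejected true nulls and R is the total number of rejections. -/
/-!
For a true null `i` and any value `R ≤ m`, the summand `1{pᵢ ≤ c R} / max(R, 1)` of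
`V / max(R, 1)` is dominated by the Abel-summed majorant
`∑_{j=1}^m (1/j - 1/(j+1)) 1{pᵢ ≤ c j} + 1/(m+1) 1{pᵢ ≤ c m}`,
since the events increase in `j` and the weights with `j ≥ max(R, 1)` telescope to
`1 / max(R, 1)`. The majorant no longer involves `R`, so super-uniformity alone bounds its
expectation by `c (∑_j (1/j - 1/(j+1)) j + m/(m+1)) = c H_m`: the dependence between the
p-values never enters. Summing over at most `m` true nulls with `c = α / (m H_m)` gives `α`.
-/

open MeasureTheory Finset

namespace BenjaminiYekutieli

noncomputable def abelMajorant (t : ℕ → ℝ) (m : ℕ) (x : ℝ) : ℝ :=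
  ∑ j ∈ Icc 1 m, (1 / (j : ℝ) - 1 / (j + 1)) * (Set.Iic (t j)).indicator 1 x
    + 1 / ((m : ℝ) + 1) * (Set.Iic (t m)).indicator 1 x

lemma one_div_sub_one_div_succ_nonneg {j : ℕ} (hj : 1 ≤ j) :
    0 ≤ 1 / (j : ℝ) - 1 / (j + 1) := by
  have : (1 : ℝ) ≤ j := by exact_mod_cast hj
  rw [sub_nonneg]
  gcongr
  linarith

lemma sum_Icc_one_div_sub_one_div_succ {u m : ℕ} (hum : u ≤ m) :
    ∑ j ∈ Icc u m, (1 / (j : ℝ) - 1 / (j + 1)) + 1 / ((m : ℝ) + 1) = 1 / u := by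
  induction m, hum using Nat.le_induction with
  | base => simp
  | succ m hum ih =>
    rw [sum_Icc_succ_top (by omega), ← ih]
    push_cast
    ring

lemma sum_Icc_one_div_sub_one_div_succ_mul_self (m : ℕ) :
    ∑ j ∈ Icc 1 m, (1 / (j : ℝ) - 1 / (j + 1)) * j + 1 / ((m : ℝ) + 1) * m
      = ∑ r ∈ range m, (1 : ℝ) / (r + 1) := by
  induction m with
  | zero => simp
  | succ m ih =>
    rw [sum_Icc_succ_top (by omega), sum_range_succ, ← ih]
    push_cast
    field_simp
    ring

lemma one_le_sum_range_one_div_succ {m : ℕ} (hm : 0 < m) :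
    1 ≤ ∑ r ∈ range m, (1 : ℝ) / (r + 1) := by
  simpa using single_le_sum (f := fun r : ℕ => (1 : ℝ) / (r + 1)) (fun r _ => by positivity)
    (mem_range.2 hm)

lemma abelMajorant_nonneg (t : ℕ → ℝ) (m : ℕ) (x : ℝ) : 0 ≤ abelMajorant t m x := by
  unfold abelMajorant
  refine add_nonneg (sum_nonneg fun j hj => ?_) ?_
  · exact mul_nonneg (one_div_sub_one_div_succ_nonneg (mem_Icc.1 hj).1)
      (Set.indicator_nonneg (fun _ _ => zero_le_one) x)
  · exact mul_nonneg (by positivity) (Set.indicator_nonneg (fun _ _ => zero_le_one) x)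

lemma indicator_div_le_abelMajorant {t : ℕ → ℝ} (ht : Monotone t) {u m : ℕ} (hm : 1 ≤ m)
    (hum : u ≤ m) (x : ℝ) :
    (Set.Iic (t u)).indicator 1 x / max (u : ℝ) 1 ≤ abelMajorant t m x := by
  by_cases hx : x ≤ t u
  swap
  · simpa [Set.indicator_of_notMem, hx] using abelMajorant_nonneg t m x
  set v := max u 1
  have hv : max (u : ℝ) 1 = v := by simp [v]
  have hxv : ∀ j, v ≤ j → (Set.Iic (t j)).indicator (1 : ℝ → ℝ) x = 1 := fun j hj =>
    Set.indicator_of_mem (hx.trans (ht ((le_max_left u 1).trans hj))) 1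
  unfold abelMajorant
  rw [Set.indicator_of_mem (Set.mem_Iic.2 hx), Pi.one_apply, hv,
    ← sum_Icc_one_div_sub_one_div_succ (max_le hum hm), hxv m (max_le hum hm), mul_one]
  gcongr ?_ + _
  calc ∑ j ∈ Icc v m, (1 / (j : ℝ) - 1 / (j + 1))
      = ∑ j ∈ Icc v m, (1 / (j : ℝ) - 1 / (j + 1)) * (Set.Iic (t j)).indicator 1 x :=
        sum_congr rfl fun j hj => by rw [hxv j (mem_Icc.1 hj).1, mul_one]
    _ ≤ _ := by
        refine sum_le_sum_of_subset_of_nonneg (Icc_subset_Icc_left (le_max_right u 1))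
          fun j hj _ => mul_nonneg (one_div_sub_one_div_succ_nonneg (mem_Icc.1 hj).1)
            (Set.indicator_nonneg (fun _ _ => zero_le_one) x)

lemma card_filter_div_le_sum_abelMajorant {t : ℕ → ℝ} (ht : Monotone t) {m u : ℕ}
    (hum : u ≤ m) (s : Finset (Fin m)) (x : Fin m → ℝ) :
    (#{i ∈ s | x i ≤ t u} : ℝ) / max (u : ℝ) 1 ≤ ∑ i ∈ s, abelMajorant t m (x i) := by
  rw [card_filter, Nat.cast_sum, sum_div]
  gcongr with i
  refine le_of_eq_of_le ?_ (indicator_div_le_abelMajorant ht i.pos hum (x i))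
  simp [Set.indicator_apply]

section Integral

variable {Ω : Type*} {mΩ : MeasurableSpace Ω} {P : Measure Ω} {p : Ω → ℝ}

lemma integrable_indicator_Iic_comp [IsFiniteMeasure P] (hp : Measurable p) (s : ℝ) :
    Integrable (fun ω => (Set.Iic s).indicator (1 : ℝ → ℝ) (p ω)) P := by
  simp_rw [← Set.indicator_comp_right]
  exact (integrable_const 1).indicator (hp measurableSet_Iic)

lemma integral_indicator_Iic_comp (hp : Measurable p) (s : ℝ) :
    ∫ ω, (Set.Iic s).indicator 1 (p ω) ∂P = P.real {ω | p ω ≤ s} := by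
  simp_rw [← Set.indicator_comp_right]
  exact integral_indicator_one (hp measurableSet_Iic)

lemma integrable_abelMajorant_comp [IsFiniteMeasure P] (hp : Measurable p) (t : ℕ → ℝ)
    (m : ℕ) :
    Integrable (fun ω => abelMajorant t m (p ω)) P := by
  unfold abelMajorant
  refine (integrable_finsetSum _ fun j _ => ?_).add ?_ <;>
    exact (integrable_indicator_Iic_comp hp _).const_mul _

lemma integral_abelMajorant_le [IsFiniteMeasure P] (hp : Measurable p) {t : ℕ → ℝ} {m : ℕ}
    (ht : ∀ j ≤ m, t j ∈ Set.Icc 0 1)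
    (hsuper : ∀ s ∈ Set.Icc (0 : ℝ) 1, P {ω | p ω ≤ s} ≤ ENNReal.ofReal s) :
    ∫ ω, abelMajorant t m (p ω) ∂P
      ≤ ∑ j ∈ Icc 1 m, (1 / (j : ℝ) - 1 / (j + 1)) * t j + 1 / ((m : ℝ) + 1) * t m := by
  have hreal : ∀ j ≤ m, P.real {ω | p ω ≤ t j} ≤ t j := fun j hj =>
    ENNReal.toReal_le_of_le_ofReal (ht j hj).1 (hsuper _ (ht j hj))
  unfold abelMajorant
  have hint : ∀ s : ℝ, ∀ a : ℝ,
      Integrable (fun ω => a * (Set.Iic s).indicator (1 : ℝ → ℝ) (p ω)) P := fun s a =>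
    (integrable_indicator_Iic_comp hp s).const_mul a
  rw [integral_add (integrable_finsetSum _ fun j _ => hint _ _) (hint _ _),
    integral_finsetSum _ fun j _ => hint _ _]
  simp only [integral_const_mul, integral_indicator_Iic_comp hp]
  gcongr with j hj
  · exact one_div_sub_one_div_succ_nonneg (mem_Icc.1 hj).1
  · exact hreal j (mem_Icc.1 hj).2
  · exact hreal m le_rfl

lemma integral_abelMajorant_linear_le [IsFiniteMeasure P] (hp : Measurable p) {m : ℕ} {c : ℝ}
    (hc : 0 ≤ c) (hcm : c * m ≤ 1)
    (hsuper : ∀ s ∈ Set.Icc (0 : ℝ) 1, P {ω | p ω ≤ s} ≤ ENNReal.ofReal s) :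
    ∫ ω, abelMajorant (fun j => c * j) m (p ω) ∂P
      ≤ c * ∑ r ∈ range m, (1 : ℝ) / (r + 1) := by
  have ht : ∀ j ≤ m, c * j ∈ Set.Icc 0 1 := fun j hj =>
    ⟨by positivity, le_trans (by gcongr) hcm⟩
  refine (integral_abelMajorant_le hp ht hsuper).trans_eq ?_
  rw [← sum_Icc_one_div_sub_one_div_succ_mul_self, mul_add, mul_sum]
  congr 1
  · exact sum_congr rfl fun j _ => by ring
  · ring

end Integral

end BenjaminiYekutieli

open BenjaminiYekutieli

open Classical in
theorem benjamini_yekutieli_controls_FDR_general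
    {Ω : Type*} {mΩ : MeasurableSpace Ω} {P : Measure Ω} [IsProbabilityMeasure P]
    (m : ℕ)
    (p : Fin m → Ω → ℝ) (hpmeas : ∀ i, Measurable (p i))
    (I₀ : Finset (Fin m))
    (hsuper : ∀ i ∈ I₀, ∀ s ∈ Set.Icc (0 : ℝ) 1,
      P {ω | p i ω ≤ s} ≤ ENNReal.ofReal s)
    {α : ℝ} (hα : α ∈ Set.Ioc (0 : ℝ) 1)
    (Hm : ℝ) (hHm : Hm = ∑ r ∈ Finset.range m, (1 : ℝ) / (r + 1))
    -- number of rejections of the step-up procedure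
    (R : Ω → ℕ)
    (hR : ∀ ω, R ω = sSup {r : ℕ | r ≤ m ∧
      r ≤ (Finset.univ.filter fun i : Fin m =>
            p i ω ≤ α * r / (m * Hm)).card})
    -- number of falsely rejected true null hypotheses
    (V : Ω → ℕ)
    (hV : ∀ ω, V ω = (I₀.filter fun i =>
            p i ω ≤ α * (R ω) / (m * Hm)).card) :
    ∫ ω, (V ω : ℝ) / max (R ω : ℝ) 1 ∂P ≤ α := by
  obtain ⟨hα0, hα1⟩ := hα
  have hHm0 : 0 ≤ Hm := hHm ▸ sum_nonneg fun r _ => by positivity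
  set c := α / (m * Hm)
  have hc : 0 ≤ c := by positivity
  have hcm : 0 < m → c * m ≤ 1 := fun hm => by
    have hHm1 : 1 ≤ Hm := hHm ▸ one_le_sum_range_one_div_succ hm
    rw [div_mul_eq_mul_div, div_le_one (by positivity)]
    nlinarith
  have hRm : ∀ ω, R ω ≤ m := fun ω =>
    hR ω ▸ csSup_le ⟨0, Nat.zero_le _, Nat.zero_le _⟩ fun r hr => hr.1
  have hpointwise : ∀ ω, (V ω : ℝ) / max (R ω : ℝ) 1
      ≤ ∑ i ∈ I₀, abelMajorant (fun j => c * j) m (p i ω) := fun ω => by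
    have hthreshold : α * (R ω) / (m * Hm) = c * R ω := mul_div_right_comm _ _ _
    rw [hV ω, hthreshold]
    exact card_filter_div_le_sum_abelMajorant (t := fun j : ℕ => c * j)
      (Nat.mono_cast.const_mul hc) (hRm ω) I₀ (p · ω)
  calc ∫ ω, (V ω : ℝ) / max (R ω : ℝ) 1 ∂P
      ≤ ∫ ω, ∑ i ∈ I₀, abelMajorant (fun j => c * j) m (p i ω) ∂P :=
        integral_mono_of_nonneg (ae_of_all _ fun ω => by positivity)
          (integrable_finsetSum _ fun i _ => integrable_abelMajorant_comp (hpmeas i) _ _)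
          (ae_of_all _ hpointwise)
    _ = ∑ i ∈ I₀, ∫ ω, abelMajorant (fun j => c * j) m (p i ω) ∂P :=
        integral_finsetSum _ fun i _ => integrable_abelMajorant_comp (hpmeas i) _ _
    _ ≤ ∑ _i ∈ I₀, c * Hm := sum_le_sum fun i hi =>
        hHm ▸ integral_abelMajorant_linear_le (hpmeas i) hc (hcm i.pos) (hsuper i hi)
    _ ≤ m * (c * Hm) := by
        rw [sum_const, nsmul_eq_mul]
        gcongr
        simpa using card_le_univ I₀
    -- not `= α`: for `m = 0` the quotient is `0 / 0 = 0`
    _ = α * ((m * Hm) / (m * Hm)) := by ring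
    _ ≤ α := mul_le_of_le_one_right hα0.le (div_self_le_one _)

open Classical in
/-- The Benjamini–Yekutieli procedure (step-up with thresholds `α j / (m H_m)`,
`H_m = ∑_{r=1}^m 1/r`) controls the false discovery rate at level `α` under arbitrary
dependence: `E[V / max(R,1)] ≤ α`, where `R` is the number of rejections and `V` the
number of rejected true nulls. -/
theorem benjamini_yekutieli_controls_FDR
    {Ω : Type*} {mΩ : MeasurableSpace Ω} {P : Measure Ω} [IsProbabilityMeasure P]
    (m : ℕ) (hm : 0 < m)
    (p : Fin m → Ω → ℝ) (hpmeas : ∀ i, Measurable (p i))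
    (hp01 : ∀ i ω, p i ω ∈ Set.Icc (0 : ℝ) 1)
    (I₀ : Finset (Fin m))
    (hsuper : ∀ i ∈ I₀, ∀ s ∈ Set.Icc (0 : ℝ) 1,
      P {ω | p i ω ≤ s} ≤ ENNReal.ofReal s)
    {α : ℝ} (hα : α ∈ Set.Ioc (0 : ℝ) 1)
    (Hm : ℝ) (hHm : Hm = ∑ r ∈ Finset.range m, (1 : ℝ) / (r + 1))
    -- number of rejections of the step-up procedure
    (R : Ω → ℕ)
    (hR : ∀ ω, R ω = sSup {r : ℕ | r ≤ m ∧
      r ≤ (Finset.univ.filter fun i : Fin m =>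
            p i ω ≤ α * r / (m * Hm)).card})
    -- number of falsely rejected true null hypotheses
    (V : Ω → ℕ)
    (hV : ∀ ω, V ω = (I₀.filter fun i =>
            p i ω ≤ α * (R ω) / (m * Hm)).card) :
    ∫ ω, (V ω : ℝ) / max (R ω : ℝ) 1 ∂P ≤ α :=
  benjamini_yekutieli_controls_FDR_general (mΩ := mΩ) m p hpmeas I₀ hsuper hα Hm hHm R hR V hV
end

section
/- For Σ symmetric positive definite and prior π = N(β_0, τ²I) on β ∈ ℝ^k, the mixture of Gaussian density ratios Λ_n^π := ∫ ψ_{(M(β−β_0), Σ/n)}(w) / ψ_{(0, Σ/n)}(w) · ψ_{(β_0, τ²I)}(β) dβ has the closed form Λ_n^π = det(I + n τ² M Σ^{-1} M)^{-1/2} · exp( (n²τ²/2) wᵀ Σ^{-1} M (I + n τ² M Σ^{-1} M)^{-1} M Σ^{-1} w ), for any fixed w ∈ ℝ^k and symmetric positive-definite matrix M. -/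
/-!
Both densities in the ratio have covariance `Σ/n`, so the ratio is the exponential of a
linear-plus-quadratic form in `δ = β - β₀`; multiplied by the prior density, the integrand becomes
an unnormalised Gaussian in `δ` with precision matrix `τ⁻² (I + nτ² MΣ⁻¹M)`. A Gaussian
integral `∫ exp (-xᵀAx/2 + bᵀx) dx` is reduced to the standard one by the substitution
`x = A^{-1/2} u` and completing the square, which produces the determinant and the quadratic
form `bᵀA⁻¹b`.
-/

open MeasureTheory Matrix Real

section Gaussian

variable {ι : Type*} [Fintype ι]

theorem Matrix.inv_smul_of_ne_zero [DecidableEq ι] {K : Type*} [Field K] {s : K} (hs : s ≠ 0)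
    {C : Matrix ι ι K} (hC : IsUnit C.det) : (s • C)⁻¹ = s⁻¹ • C⁻¹ :=
  inv_smul' C (Units.mk0 s hs) hC

theorem Matrix.mulVec_dotProduct_mulVec {R : Type*} [CommSemiring R] (B C : Matrix ι ι R)
    (x y : ι → R) : (B *ᵥ x) ⬝ᵥ C *ᵥ y = x ⬝ᵥ (Bᵀ * C) *ᵥ y := by
  rw [dotProduct_mulVec, vecMul_mulVec, ← dotProduct_mulVec]

theorem Matrix.posDef_one_add_smul_mul_mul [DecidableEq ι] {N M : Matrix ι ι ℝ}
    (hN : N.PosSemidef) (hM : Mᵀ = M) {c : ℝ} (hc : 0 ≤ c) :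
    (1 + c • (M * N * M)).PosDef := by
  have h := hN.conjTranspose_mul_mul_same M
  rw [conjTranspose_eq_transpose_of_trivial, hM] at h
  exact PosDef.one.add_posSemidef (h.smul hc)

theorem integral_comp_mulVec [DecidableEq ι] {E : Type*} [NormedAddCommGroup E]
    [NormedSpace ℝ E] {S : Matrix ι ι ℝ} (hS : S.det ≠ 0) (f : (ι → ℝ) → E) :
    ∫ x, f (S *ᵥ x) = |S.det|⁻¹ • ∫ x, f x := by
  have hinj : Function.Injective (toLin' S) :=
    mulVec_injective_iff_isUnit.mpr ((isUnit_iff_isUnit_det S).mpr hS.isUnit)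
  have hemb : MeasurableEmbedding (toLin' S) :=
    ((toLin' S).isClosedEmbedding_of_injective
      (LinearMap.ker_eq_bot.mpr hinj)).measurableEmbedding
  change ∫ x, f (toLin' S x) = _
  rw [← hemb.integral_map, Real.map_matrix_volume_pi_eq_smul_volume_pi hS,
    integral_smul_measure, ENNReal.toReal_ofReal (abs_nonneg _), abs_inv]

theorem integral_exp_neg_half_dotProduct_self :
    ∫ u : ι → ℝ, exp (-(1 / 2) * (u ⬝ᵥ u)) = √((2 * π) ^ Fintype.card ι) := by
  have hprod (u : ι → ℝ) : exp (-(1 / 2) * (u ⬝ᵥ u)) = ∏ i, exp (-(1 / 2) * u i ^ 2) := by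
    rw [← exp_sum, dotProduct, Finset.mul_sum]
    simp only [sq]
  simp_rw [hprod]
  rw [integral_fintype_prod_volume_eq_prod (fun _ x => exp (-(1 / 2) * x ^ 2)),
    ← Finset.card_univ, ← Finset.prod_const, sqrt_prod _ fun _ _ => by positivity]
  simp only [integral_gaussian]
  norm_num [div_div_eq_mul_div, mul_comm]

theorem integral_exp_neg_half_dotProduct_self_add (c : ι → ℝ) :
    ∫ u : ι → ℝ, exp (-(1 / 2) * (u ⬝ᵥ u) + c ⬝ᵥ u) =
      √((2 * π) ^ Fintype.card ι) * exp (c ⬝ᵥ c / 2) := by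
  have hsquare (u : ι → ℝ) : exp (-(1 / 2) * (u ⬝ᵥ u) + c ⬝ᵥ u) =
      exp (c ⬝ᵥ c / 2) * exp (-(1 / 2) * ((u - c) ⬝ᵥ (u - c))) := by
    rw [← exp_add]
    simp only [sub_dotProduct, dotProduct_sub, dotProduct_comm c u]
    ring_nf
  simp_rw [hsquare]
  rw [integral_const_mul, integral_sub_right_eq_self (fun u => exp (-(1 / 2) * (u ⬝ᵥ u))) c,
    integral_exp_neg_half_dotProduct_self, mul_comm]

open scoped MatrixOrder in
theorem integral_exp_neg_half_dotProduct_mulVec_add [DecidableEq ι] {A : Matrix ι ι ℝ}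
    (hA : A.PosDef) (b : ι → ℝ) :
    ∫ x, exp (-(1 / 2) * (x ⬝ᵥ A *ᵥ x) + b ⬝ᵥ x) =
      √((2 * π) ^ Fintype.card ι * A⁻¹.det) * exp (b ⬝ᵥ A⁻¹ *ᵥ b / 2) := by
  set S := CFC.sqrt A⁻¹
  have hSS : S * S = A⁻¹ := CFC.sqrt_mul_sqrt_self _ hA.inv.posSemidef.nonneg
  have hSt : Sᵀ = S := (CFC.sqrt_nonneg _).posSemidef.isHermitian
  have hSAS : Sᵀ * A * S = 1 := by
    rw [hSt, mul_assoc]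
    refine mul_eq_one_comm.mp ?_
    rw [mul_assoc, hSS, mul_nonsing_inv _ hA.det_pos.ne'.isUnit]
  have hdetS : S.det = √A⁻¹.det := by
    simpa using hA.inv.posSemidef.det_sqrt
  have hdetS_pos : 0 < S.det := hdetS ▸ sqrt_pos.mpr hA.inv.det_pos
  have hsubst (u : ι → ℝ) : -(1 / 2) * ((S *ᵥ u) ⬝ᵥ A *ᵥ (S *ᵥ u)) + b ⬝ᵥ S *ᵥ u =
      -(1 / 2) * (u ⬝ᵥ u) + (S *ᵥ b) ⬝ᵥ u := by
    rw [mulVec_mulVec, mulVec_dotProduct_mulVec, ← mul_assoc, hSAS, one_mulVec,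
      dotProduct_comm (S *ᵥ b), ← dotProduct_transpose_mulVec S b u, hSt]
  have hnorm : (S *ᵥ b) ⬝ᵥ (S *ᵥ b) = b ⬝ᵥ A⁻¹ *ᵥ b := by
    rw [mulVec_dotProduct_mulVec, hSt, hSS]
  calc ∫ x, exp (-(1 / 2) * (x ⬝ᵥ A *ᵥ x) + b ⬝ᵥ x)
      = S.det * ∫ u, exp (-(1 / 2) * (u ⬝ᵥ u) + (S *ᵥ b) ⬝ᵥ u) := by
        simp_rw [← hsubst]
        rw [integral_comp_mulVec hdetS_pos.ne'
            fun x => exp (-(1 / 2) * (x ⬝ᵥ A *ᵥ x) + b ⬝ᵥ x),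
          abs_of_pos hdetS_pos, smul_eq_mul, mul_inv_cancel_left₀ hdetS_pos.ne']
    _ = √((2 * π) ^ Fintype.card ι * A⁻¹.det) * exp (b ⬝ᵥ A⁻¹ *ᵥ b / 2) := by
        rw [integral_exp_neg_half_dotProduct_self_add, hnorm, hdetS,
          sqrt_mul (by positivity)]
        ring

end Gaussian

/-- The `k`-variate normal density with mean `m` and covariance matrix `C`. -/
noncomputable def mvnPdf {k : ℕ} (m : Fin k → ℝ) (C : Matrix (Fin k) (Fin k) ℝ)
    (x : Fin k → ℝ) : ℝ :=
  (Real.sqrt ((2 * Real.pi) ^ k * C.det))⁻¹ *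
    Real.exp (-(1 / 2) * ((x - m) ⬝ᵥ C⁻¹ *ᵥ (x - m)))

section mvnPdf

variable {k : ℕ}

theorem mvnPdf_div_mvnPdf_zero {C : Matrix (Fin k) (Fin k) ℝ} (hC : C.PosDef)
    (m x : Fin k → ℝ) :
    mvnPdf m C x / mvnPdf 0 C x = exp (m ⬝ᵥ C⁻¹ *ᵥ x - (1 / 2) * (m ⬝ᵥ C⁻¹ *ᵥ m)) := by
  have hCt : Cᵀ = C := IsSymm.eq hC.isHermitian
  have hnorm : (√((2 * π) ^ k * C.det))⁻¹ ≠ 0 := by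
    have := hC.det_pos
    positivity
  rw [mvnPdf, mvnPdf, mul_div_mul_left _ _ hnorm, ← exp_sub]
  congr 1
  simp only [sub_zero, mulVec_sub, dotProduct_sub, sub_dotProduct]
  rw [← dotProduct_transpose_mulVec C⁻¹ m x, transpose_nonsing_inv, hCt]
  ring

theorem mvnPdf_smul_one (m x : Fin k → ℝ) {s : ℝ} (hs : s ≠ 0) :
    mvnPdf m (s • 1) x =
      (√((2 * π) ^ k * s ^ k))⁻¹ * exp (-(1 / 2) * (s⁻¹ * ((x - m) ⬝ᵥ (x - m)))) := by
  rw [mvnPdf, det_smul, det_one, Fintype.card_fin, mul_one, inv_smul_of_ne_zero hs (by simp),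
    inv_one, smul_mulVec, one_mulVec, dotProduct_smul]
  rfl

theorem mvnPdf_ratio_mul_mvnPdf_eq {Sig M : Matrix (Fin k) (Fin k) ℝ} (hSig : Sig.PosDef)
    (hM : Mᵀ = M) (β₀ w β : Fin k → ℝ) {t s : ℝ} (ht : 0 < t) (hs : 0 < s) :
    (mvnPdf (M *ᵥ (β - β₀)) (t⁻¹ • Sig) w / mvnPdf 0 (t⁻¹ • Sig) w) * mvnPdf β₀ (s • 1) β =
      (√((2 * π) ^ k * s ^ k))⁻¹ *
        exp (-(1 / 2) *
            ((β - β₀) ⬝ᵥ (s⁻¹ • (1 + (t * s) • (M * Sig⁻¹ * M))) *ᵥ (β - β₀)) +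
          (t • (M * Sig⁻¹) *ᵥ w) ⬝ᵥ (β - β₀)) := by
  rw [mvnPdf_div_mvnPdf_zero (hSig.smul (inv_pos.mpr ht)), mvnPdf_smul_one _ _ hs.ne',
    mul_left_comm, ← exp_add,
    inv_smul_of_ne_zero (inv_ne_zero ht.ne') hSig.det_pos.ne'.isUnit]
  congr 2
  generalize β - β₀ = δ
  have hlin : (M *ᵥ δ) ⬝ᵥ Sig⁻¹ *ᵥ w = δ ⬝ᵥ (M * Sig⁻¹) *ᵥ w := by
    rw [mulVec_dotProduct_mulVec, hM]
  have hquad : (M *ᵥ δ) ⬝ᵥ Sig⁻¹ *ᵥ (M *ᵥ δ) = δ ⬝ᵥ (M * Sig⁻¹ * M) *ᵥ δ := by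
    rw [mulVec_mulVec, mulVec_dotProduct_mulVec, hM, mul_assoc]
  simp only [inv_inv, smul_mulVec, dotProduct_smul, smul_dotProduct, smul_eq_mul,
    add_mulVec, one_mulVec, dotProduct_add]
  rw [hlin, hquad, dotProduct_comm ((M * Sig⁻¹) *ᵥ w) δ]
  field_simp
  ring

end mvnPdf

/-- Closed form of the mixture of Gaussian density ratios with prior `N(β₀, τ²I)`:
`∫ ψ_{(M(β−β₀),Σ/n)}(w)/ψ_{(0,Σ/n)}(w) · ψ_{(β₀,τ²I)}(β) dβ
  = det(I + nτ² MΣ⁻¹M)^{-1/2} exp((n²τ²/2) wᵀΣ⁻¹M(I + nτ²MΣ⁻¹M)⁻¹MΣ⁻¹w)`. -/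
theorem sst_mixture_statistic_closed_form
    {k : ℕ} (Sig M : Matrix (Fin k) (Fin k) ℝ)
    (hSig : Sig.PosDef) (hM : M.PosDef)
    (β₀ w : Fin k → ℝ) (τ : ℝ) (hτ : 0 < τ) (n : ℕ) (hn : 1 ≤ n) :
    ∫ β : Fin k → ℝ,
        (mvnPdf (M *ᵥ (β - β₀)) ((n : ℝ)⁻¹ • Sig) w /
            mvnPdf 0 ((n : ℝ)⁻¹ • Sig) w) *
          mvnPdf β₀ (τ ^ 2 • (1 : Matrix (Fin k) (Fin k) ℝ)) β ∂volume =
      (Real.sqrt ((1 + ((n : ℝ) * τ ^ 2) • (M * Sig⁻¹ * M)).det))⁻¹ *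
        Real.exp (((n : ℝ) ^ 2 * τ ^ 2 / 2) *
          (w ⬝ᵥ (Sig⁻¹ * M * (1 + ((n : ℝ) * τ ^ 2) • (M * Sig⁻¹ * M))⁻¹ * M * Sig⁻¹)
            *ᵥ w)) := by
  set B := 1 + ((n : ℝ) * τ ^ 2) • (M * Sig⁻¹ * M)
  have hn0 : (0 : ℝ) < n := by exact_mod_cast hn
  have hτ2 : 0 < τ ^ 2 := pow_pos hτ 2
  have hMt : Mᵀ = M := IsSymm.eq hM.isHermitian
  have hSigt : Sigᵀ = Sig := IsSymm.eq hSig.isHermitian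
  have hB : B.PosDef := posDef_one_add_smul_mul_mul hSig.inv.posSemidef hMt (by positivity)
  simp_rw [mvnPdf_ratio_mul_mvnPdf_eq hSig hMt β₀ w _ hn0 hτ2]
  rw [integral_const_mul, integral_sub_right_eq_self (fun δ =>
      exp (-(1 / 2) * (δ ⬝ᵥ ((τ ^ 2)⁻¹ • B) *ᵥ δ) + ((n : ℝ) • (M * Sig⁻¹) *ᵥ w) ⬝ᵥ δ)),
    integral_exp_neg_half_dotProduct_mulVec_add (hB.smul (inv_pos.mpr hτ2)),
    inv_smul_of_ne_zero (inv_ne_zero hτ2.ne') hB.det_pos.ne'.isUnit, inv_inv, Fintype.card_fin,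
    ← mul_assoc]
  congr 2
  · rw [det_smul, Fintype.card_fin, det_nonsing_inv, Ring.inverse_eq_inv', ← mul_assoc,
      sqrt_mul (by positivity : (0 : ℝ) ≤ (2 * π) ^ k * (τ ^ 2) ^ k), sqrt_inv,
      inv_mul_cancel_left₀ (by positivity)]
  · simp only [mulVec_smul, smul_mulVec, dotProduct_smul, smul_dotProduct, smul_eq_mul]
    rw [mulVec_dotProduct_mulVec, mulVec_mulVec, transpose_mul, hMt, transpose_nonsing_inv, hSigt]
    simp only [Matrix.mul_assoc]
    ring
end
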